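/- Let Z be totally separated, Y have absorbing 0 and unit 1 with {0} open in Y (so Y is discrete). If J is a prime multiplicative ideal of C(Z,Y) with J ⊆ I(z) for some z ∈ Z, then J = I(z). -/

import Mathlib

/-! Since `{0}` is clopen in `Y`, the zero set `U` of any `f` is clopen in `Z`, so it has a
characteristic map `χ_U` (zero on `U`, one off `U`). Then `χ_U · χ_{Uᶜ} = 0 ∈ J`, and
`χ_{Uᶜ}(z) = 1` whenever `f(z) = 0`, so primality puts `χ_U` in `J`; finally `f = f · χ_U ∈ J`. -/

/-- Pointwise multiplication of continuous maps into a topological magma. -/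
def pmul {Z Y : Type*} [TopologicalSpace Z] [TopologicalSpace Y] [Mul Y]
    (hc : Continuous fun p : Y × Y => p.1 * p.2) (f g : C(Z, Y)) : C(Z, Y) :=
  ⟨fun z => f z * g z, hc.comp (f.continuous.prodMk g.continuous)⟩

theorem isClopen_preimage_of_isOpen_singleton {Z Y : Type*} [TopologicalSpace Z]
    [TopologicalSpace Y] [T1Space Y] {y0 : Y} (h0open : IsOpen ({y0} : Set Y)) (f : C(Z, Y)) :
    IsClopen (f ⁻¹' {y0}) :=
  IsClopen.preimage ⟨isClosed_singleton, h0open⟩ f.continuous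

section

variable {Z Y : Type*} [TopologicalSpace Z] [TopologicalSpace Y] [Mul Y]
  (hc : Continuous fun p : Y × Y => p.1 * p.2) {y0 y1 : Y}

theorem pmul_apply (f g : C(Z, Y)) (w : Z) : pmul hc f g w = f w * g w := rfl

theorem pmul_eq_const_of_vanish_on_compl (habs : ∀ y : Y, y0 * y = y0 ∧ y * y0 = y0)
    {U : Set Z} {χ χ' : C(Z, Y)} (hχ : ∀ w ∈ U, χ w = y0) (hχ' : ∀ w ∉ U, χ' w = y0) :
    pmul hc χ χ' = ContinuousMap.const Z y0 := by
  ext w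
  rw [pmul_apply, ContinuousMap.const_apply]
  by_cases hw : w ∈ U
  · rw [hχ w hw, (habs _).1]
  · rw [hχ' w hw, (habs _).2]

theorem pmul_eq_self_of_vanish_on_zeroSet (habs : ∀ y : Y, y * y0 = y0)
    (hunit : ∀ y : Y, y * y1 = y) {f χ : C(Z, Y)} (hχ0 : ∀ w ∈ f ⁻¹' {y0}, χ w = y0)
    (hχ1 : ∀ w ∉ f ⁻¹' {y0}, χ w = y1) : pmul hc f χ = f := by
  ext w
  rw [pmul_apply]
  by_cases hw : w ∈ f ⁻¹' {y0}
  · rw [hχ0 w hw, habs, hw]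
  · rw [hχ1 w hw, hunit]

end

theorem stmt18_general {Z Y : Type*} [TopologicalSpace Z] [TopologicalSpace Y]
    [TotallySeparatedSpace Y] [Mul Y]
    (hc : Continuous fun p : Y × Y => p.1 * p.2)
    (y0 y1 : Y) (habs : ∀ y : Y, y0 * y = y0 ∧ y * y0 = y0)
    (hunit : ∀ y : Y, y * y1 = y) (h10 : y1 ≠ y0)
    (h0open : IsOpen ({y0} : Set Y))
    (hchar : ∀ U : Set Z, IsClopen U →
      ∃ χ : C(Z, Y), (∀ w ∈ U, χ w = y0) ∧ (∀ w ∉ U, χ w = y1))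
    (z : Z) (J : Set C(Z, Y))
    (hJTheta : ContinuousMap.const Z y0 ∈ J)
    (hJideal : ∀ f g : C(Z, Y), g ∈ J → pmul hc f g ∈ J)
    (hJprime : ∀ f g : C(Z, Y), pmul hc f g ∈ J → f ∈ J ∨ g ∈ J)
    (hsub : J ⊆ {f : C(Z, Y) | f z = y0}) :
    J = {f : C(Z, Y) | f z = y0} := by
  refine hsub.antisymm fun f (hfz : f z = y0) => ?_
  have hU := isClopen_preimage_of_isOpen_singleton h0open f
  obtain ⟨χ, hχ0, hχ1⟩ := hchar _ hU
  obtain ⟨χ', hχ'0, hχ'1⟩ := hchar _ hU.compl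
  have hχ'_notMem : χ' ∉ J := fun h => h10 <| (hχ'1 z (not_not.mpr hfz)).symm.trans (hsub h)
  have hχ_mem : χ ∈ J := by
    have hprod := pmul_eq_const_of_vanish_on_compl hc habs hχ0 hχ'0
    exact (hJprime χ χ' (hprod ▸ hJTheta)).resolve_right hχ'_notMem
  rw [← pmul_eq_self_of_vanish_on_zeroSet hc (fun y => (habs y).2) hunit hχ0 hχ1]
  exact hJideal f χ hχ_mem

theorem stmt18 {Z Y : Type*} [TopologicalSpace Z] [TopologicalSpace Y]
    [TotallySeparatedSpace Z] [TotallySeparatedSpace Y] [Mul Y]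
    (hc : Continuous fun p : Y × Y => p.1 * p.2)
    (y0 y1 : Y) (habs : ∀ y : Y, y0 * y = y0 ∧ y * y0 = y0)
    (hunit : ∀ y : Y, y * y1 = y) (h10 : y1 ≠ y0)
    (h0open : IsOpen ({y0} : Set Y))
    (hchar : ∀ U : Set Z, IsClopen U →
      ∃ χ : C(Z, Y), (∀ w ∈ U, χ w = y0) ∧ (∀ w ∉ U, χ w = y1))
    (z : Z) (J : Set C(Z, Y))
    (hJTheta : ContinuousMap.const Z y0 ∈ J)
    (hJideal : ∀ f g : C(Z, Y), g ∈ J → pmul hc f g ∈ J)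
    (hJprime : ∀ f g : C(Z, Y), pmul hc f g ∈ J → f ∈ J ∨ g ∈ J)
    (hsub : J ⊆ {f : C(Z, Y) | f z = y0}) :
    J = {f : C(Z, Y) | f z = y0} :=
  stmt18_general hc y0 y1 habs hunit h10 h0open hchar z J hJTheta hJideal hJprime hsub
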